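/- Consequently, the set of identities {associativity, (xy)‾x = x(yx)‾, x̄²x = x̄, x²x̄ = x̿, (x̄x)‾ = x̄x, and (x^q)‾ = x̄^q for all primes q ≠ p} does not imply the identity (x^p)‾ = x̄^p; hence no finite subset of the identity basis of epigroups axiomatizes the equational theory of epigroups. -/

import Mathlib

/-
In a group with zero let `x̄ = 1` if `x = 1` and `x̄ = 0` otherwise. Since `xy = 1 ↔ yx = 1`,
all the listed identities except the power ones hold by a two-case check, and
`(xⁿ)‾ = x̄ⁿ` (for `n ≥ 1`) says exactly that `xⁿ = 1` forces `x = 1`. In `G⁰` for a group `G`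
of exponent `p` this holds for every `n` coprime to `p`, in particular for every prime `q ≠ p`,
but fails for `n = p` as soon as `G` is nontrivial; take `G = ℤ/pℤ`.
-/

/-- `mpow mul x n` is the `(n+1)`-st power of `x` with respect to the binary
operation `mul`; thus `mpow mul x (n - 1) = xⁿ` for `n ≥ 1`. -/
def mpow {M : Type*} (mul : M → M → M) (x : M) : ℕ → M
  | 0 => x
  | n + 1 => mul (mpow mul x n) x

lemma mpow_mul_eq_pow_succ {M : Type*} [Monoid M] (x : M) (n : ℕ) :
    mpow (· * ·) x n = x ^ (n + 1) := by
  induction n with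
  | zero => simp [mpow]
  | succ n ih => rw [mpow, ih, ← pow_succ]

section OneIndicator

variable {G₀ : Type*} [GroupWithZero G₀] [DecidableEq G₀]

def oneIndicator (x : G₀) : G₀ := if x = 1 then 1 else 0

@[simp] lemma oneIndicator_one : oneIndicator (1 : G₀) = 1 := if_pos rfl

lemma oneIndicator_of_ne_one {x : G₀} (h : x ≠ 1) : oneIndicator x = 0 := if_neg h

@[simp] lemma oneIndicator_zero : oneIndicator (0 : G₀) = 0 := oneIndicator_of_ne_one zero_ne_one

lemma oneIndicator_mul_mul_self_comm (x y : G₀) :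
    oneIndicator (x * y) * x = x * oneIndicator (y * x) := by
  by_cases h : x * y = 1
  · rw [h, mul_eq_one_comm.mp h, oneIndicator_one, one_mul, mul_one]
  · rw [oneIndicator_of_ne_one h, oneIndicator_of_ne_one (mt mul_eq_one_comm.mp h), zero_mul,
      mul_zero]

lemma oneIndicator_mul_oneIndicator_mul_self (x : G₀) :
    oneIndicator x * oneIndicator x * x = oneIndicator x := by
  by_cases h : x = 1
  · simp [h]
  · simp [oneIndicator_of_ne_one h]

lemma mul_self_mul_oneIndicator (x : G₀) :
    x * x * oneIndicator x = oneIndicator (oneIndicator x) := by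
  by_cases h : x = 1
  · simp [h]
  · simp [oneIndicator_of_ne_one h]

lemma oneIndicator_oneIndicator_mul_self (x : G₀) :
    oneIndicator (oneIndicator x * x) = oneIndicator x * x := by
  by_cases h : x = 1
  · simp [h]
  · simp [oneIndicator_of_ne_one h]

lemma oneIndicator_pow_eq_iff {n : ℕ} (hn : n ≠ 0) (x : G₀) :
    oneIndicator (x ^ n) = oneIndicator x ^ n ↔ (x ^ n = 1 → x = 1) := by
  by_cases hx : x = 1
  · simp [hx]
  · rw [oneIndicator_of_ne_one hx, zero_pow hn]
    by_cases hxn : x ^ n = 1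
    · simp [hxn, hx]
    · simp [oneIndicator_of_ne_one hxn, hxn]

lemma oneIndicator_mpow_pred_eq_iff {n : ℕ} (hn : n ≠ 0) (x : G₀) :
    oneIndicator (mpow (· * ·) x (n - 1)) = mpow (· * ·) (oneIndicator x) (n - 1) ↔
      (x ^ n = 1 → x = 1) := by
  rw [mpow_mul_eq_pow_succ, mpow_mul_eq_pow_succ,
    Nat.sub_add_cancel (Nat.one_le_iff_ne_zero.mpr hn)]
  exact oneIndicator_pow_eq_iff hn x

end OneIndicator

namespace WithZero

variable {G : Type*} [Group G]

lemma eq_one_of_pow_eq_one_of_coprime {p n : ℕ} (hG : ∀ g : G, g ^ p = 1) (hn : n ≠ 0)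
    (hpn : p.Coprime n) {x : WithZero G} (hx : x ^ n = 1) : x = 1 := by
  induction x with
  | zero => exact absurd hx (by simp [zero_pow hn])
  | coe g =>
    rw [← coe_pow, ← coe_one, coe_inj] at hx
    have hg : g ^ p.gcd n = 1 := pow_gcd_eq_one.mpr ⟨hG g, hx⟩
    rw [hpn.gcd_eq_one, pow_one] at hg
    rw [hg, coe_one]

end WithZero

lemma Multiplicative.ofAdd_zmod_pow_self (p : ℕ) (a : ZMod p) :
    Multiplicative.ofAdd a ^ p = 1 := by
  rw [← ofAdd_nsmul, nsmul_eq_mul, ZMod.natCast_self, zero_mul, ofAdd_zero]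

/-- For every prime `p`, the identities (associativity, `(xy)‾x = x(yx)‾`,
`x̄²x = x̄`, `x²x̄ = bar (bar x)`, `(x̄x)‾ = x̄x`, and `(x^q)‾ = x̄^q` for all
primes `q ≠ p`) do not imply the identity `(x^p)‾ = x̄^p`: there is a unary
semigroup satisfying all of the former but failing the latter. Hence no finite
subset of the identity basis of epigroups axiomatizes the equational theory of
epigroups. -/
theorem stmt17 (p : ℕ) (hp : p.Prime) :
    ∃ (M : Type) (mul : M → M → M) (bar : M → M),
      (∀ a b c : M, mul (mul a b) c = mul a (mul b c)) ∧
      (∀ x y : M, mul (bar (mul x y)) x = mul x (bar (mul y x))) ∧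
      (∀ x : M, mul (mul (bar x) (bar x)) x = bar x) ∧
      (∀ x : M, mul (mul x x) (bar x) = bar (bar x)) ∧
      (∀ x : M, bar (mul (bar x) x) = mul (bar x) x) ∧
      (∀ q : ℕ, q.Prime → q ≠ p →
        ∀ x : M, bar (mpow mul x (q - 1)) = mpow mul (bar x) (q - 1)) ∧
      ¬ (∀ x : M, bar (mpow mul x (p - 1)) = mpow mul (bar x) (p - 1)) := by
  have : Fact p.Prime := ⟨hp⟩
  refine ⟨WithZero (Multiplicative (ZMod p)), (· * ·), oneIndicator, mul_assoc,
    oneIndicator_mul_mul_self_comm, oneIndicator_mul_oneIndicator_mul_self,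
    mul_self_mul_oneIndicator, oneIndicator_oneIndicator_mul_self,
    fun q hq hqp x => (oneIndicator_mpow_pred_eq_iff hq.ne_zero x).mpr ?_, fun h => ?_⟩
  · exact WithZero.eq_one_of_pow_eq_one_of_coprime (Multiplicative.ofAdd_zmod_pow_self p)
      hq.ne_zero ((Nat.coprime_primes hp hq).mpr hqp.symm)
  · have hexp : WithZero.exp (1 : ZMod p) ^ p = 1 := by
      rw [WithZero.exp_eq_coe_ofAdd, ← WithZero.coe_pow, Multiplicative.ofAdd_zmod_pow_self,
        WithZero.coe_one]
    have hexp_one := (oneIndicator_mpow_pred_eq_iff hp.ne_zero _).mp (h _) hexp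
    exact one_ne_zero (WithZero.exp_eq_one.mp hexp_one)
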